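/- arXiv:2603.25850 — 10 statements merged into one kernel-verified Lean document; each statement's English description precedes it below -/
import Mathlib

section
/- Let (X,d) be a finite ultrametric space with |X| ≥ 2. Then the diametrical graph G_X of (X,d) is a complete k-partite graph for some k ≥ 2; that is, X can be partitioned into k ≥ 2 nonempty parts such that d(u,v) = diam X holds if and only if u and v lie in different parts. -/
/-- The diametrical graph of a finite ultrametric space with at least two points
is complete `k`-partite with `k ≥ 2`: the space can be partitioned into `k ≥ 2`
nonempty parts such that `dist u v = diam X` iff `u` and `v` lie in different parts. -/
theorem diametrical_graph_complete_multipartite {X : Type*} [MetricSpace X] [Fintype X]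
    [IsUltrametricDist X] (h : 2 ≤ Fintype.card X) :
    ∃ (k : ℕ) (P : Fin k → Set X), 2 ≤ k ∧
      (∀ i, (P i).Nonempty) ∧
      (∀ x : X, ∃! i, x ∈ P i) ∧
      (∀ (u v : X) (i j : Fin k), u ∈ P i → v ∈ P j →
        (dist u v = Metric.diam (Set.univ : Set X) ↔ i ≠ j)) := by
  set D := Metric.diam (Set.univ : Set X) with hD
  have hne : Nonempty X := Fintype.card_pos_iff.mp (by omega)
  have hbdd : Bornology.IsBounded (Set.univ : Set X) := Set.finite_univ.isBounded
  -- distance always ≤ D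
  have hle : ∀ u v : X, dist u v ≤ D := fun u v =>
    Metric.dist_le_diam_of_mem hbdd (Set.mem_univ u) (Set.mem_univ v)
  -- diameter is attained
  obtain ⟨p, hp⟩ := Finite.exists_max (fun p : X × X => dist p.1 p.2)
  have hattain : dist p.1 p.2 = D := by
    refine le_antisymm (hle _ _) ?_
    exact Metric.diam_le_of_forall_dist_le dist_nonneg
      (fun u _ v _ => hp (u, v))
  -- D > 0
  obtain ⟨x, y, hxy⟩ := Fintype.one_lt_card_iff.mp (show 1 < Fintype.card X by omega)
  have hDpos : 0 < D := lt_of_lt_of_le (dist_pos.mpr hxy) (hle x y)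
  -- equivalence relation
  have htrans : ∀ {a b c : X}, dist a b < D → dist b c < D → dist a c < D := by
    intro a b c hab hbc
    exact lt_of_le_of_lt (IsUltrametricDist.dist_triangle_max a b c) (max_lt hab hbc)
  let s : Setoid X := ⟨fun u v => dist u v < D,
    ⟨fun a => by simpa using hDpos, fun {a b} hab => by rwa [dist_comm],
     fun {a b c} => htrans⟩⟩
  have key : ∀ u v : X, ¬ s.r u v ↔ dist u v = D := by
    intro u v
    constructor
    · intro hnr; exact le_antisymm (hle u v) (not_lt.mp hnr)
    · intro he hr; exact absurd he (ne_of_lt hr)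
  haveI : Fintype (Quotient s) := Fintype.ofFinite _
  let e := (Fintype.equivFin (Quotient s)).symm
  set k := Fintype.card (Quotient s) with hk
  refine ⟨k, fun i => {x : X | Quotient.mk s x = e i}, ?_, ?_, ?_, ?_⟩
  · -- k ≥ 2 : the pair p has distinct classes
    have hpne : dist p.1 p.2 = D := hattain
    have : Quotient.mk s p.1 ≠ Quotient.mk s p.2 := by
      intro hq
      have := Quotient.exact hq
      exact absurd hpne (ne_of_lt this)
    exact Fintype.one_lt_card_iff_nontrivial.mpr ⟨_, _, this⟩
  · intro i
    obtain ⟨x, hx⟩ := Quotient.exists_rep (e i)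
    exact ⟨x, hx⟩
  · intro x
    refine ⟨e.symm (Quotient.mk s x), ?_, ?_⟩
    · show Quotient.mk s x = e (e.symm (Quotient.mk s x))
      exact (e.apply_symm_apply _).symm
    · intro j hj
      simp only [Set.mem_setOf_eq] at hj
      rw [Equiv.eq_symm_apply]
      exact hj.symm
  · intro u v i j hu hv
    simp only [Set.mem_setOf_eq] at hu hv
    rw [← key]
    constructor
    · intro hnr hij
      apply hnr
      have : Quotient.mk s u = Quotient.mk s v := by rw [hu, hv, hij]
      exact Quotient.exact this
    · intro hij hr
      apply hij
      have : Quotient.mk s u = Quotient.mk s v := Quotient.sound hr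
      apply e.injective
      rw [← hu, ← hv, this]
end

section
/- Let (X,d) be a finite ultrametric space with |X| ≥ 2. Every part of the complete multipartite diametrical graph G_X is an open ball in (X,d) of radius r = diam X, and conversely every open ball B_r(c) ⊆ X with r = diam X and c ∈ X is a part of G_X. -/
/-- Every part of the complete multipartite diametrical graph of a finite ultrametric
space with at least two points is an open ball of radius `diam X`, and conversely
every open ball of radius `diam X` is a part. -/
theorem parts_are_balls {X : Type*} [MetricSpace X] [Fintype X] [IsUltrametricDist X]
    (h : 2 ≤ Fintype.card X) (k : ℕ) (P : Fin k → Set X)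
    (hne : ∀ i, (P i).Nonempty)
    (hpart : ∀ x : X, ∃! i, x ∈ P i)
    (hdiam : ∀ (u v : X) (i j : Fin k), u ∈ P i → v ∈ P j →
      (dist u v = Metric.diam (Set.univ : Set X) ↔ i ≠ j)) :
    (∀ i, ∃ c : X, P i = Metric.ball c (Metric.diam (Set.univ : Set X))) ∧
      (∀ c : X, ∃ i, Metric.ball c (Metric.diam (Set.univ : Set X)) = P i) := by
  have hbdd : Bornology.IsBounded (Set.univ : Set X) := Set.finite_univ.isBounded
  have key : ∀ (i : Fin k) (c : X), c ∈ P i →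
      P i = Metric.ball c (Metric.diam (Set.univ : Set X)) := by
    intro i c hc
    ext x
    constructor
    · intro hx
      have hle : dist c x ≤ Metric.diam (Set.univ : Set X) :=
        Metric.dist_le_diam_of_mem hbdd trivial trivial
      have hne' : dist c x ≠ Metric.diam (Set.univ : Set X) := by
        intro heq
        exact ((hdiam c x i i hc hx).mp heq) rfl
      simpa [Metric.mem_ball, dist_comm] using lt_of_le_of_ne hle hne'
    · intro hx
      obtain ⟨j, hj, _⟩ := hpart x
      by_cases hij : j = i
      · exact hij ▸ hj
      · exfalso
        have := (hdiam c x i j hc hj).mpr (fun hh => hij hh.symm)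
        rw [Metric.mem_ball, dist_comm] at hx
        exact absurd this (ne_of_lt hx)
  constructor
  · intro i
    obtain ⟨c, hc⟩ := hne i
    exact ⟨c, key i c hc⟩
  · intro c
    obtain ⟨i, hi, _⟩ := hpart c
    exact ⟨i, (key i c hi).symm⟩
end

section
/- Let (X,d) be a finite ultrametric space with |X| ≥ 2 whose diametrical graph is complete k-partite with parts X_1, …, X_k. Then C(X) = {diam X} ∪ (⋂_{i=1}^{k} C(X_i)), where C(X_i) is the center of distances of the subspace (X_i, d restricted to X_i). -/
/-- The center of distances of a metric space. -/
def centerOfDistances (X : Type*) [MetricSpace X] : Set ℝ :=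
  {t : ℝ | ∀ p : X, ∃ x : X, dist p x = t}

/-- For a finite ultrametric space with at least two points whose diametrical graph
is complete `k`-partite with parts `P 0, …, P (k-1)`, we have
`C(X) = {diam X} ∪ ⋂ i, C(P i)`. -/
theorem center_eq_diam_union_iInter {X : Type*} [MetricSpace X] [Fintype X]
    [IsUltrametricDist X] (h : 2 ≤ Fintype.card X) (k : ℕ) (hk : 2 ≤ k)
    (P : Fin k → Set X)
    (hne : ∀ i, (P i).Nonempty)
    (hpart : ∀ x : X, ∃! i, x ∈ P i)
    (hdiam : ∀ (u v : X) (i j : Fin k), u ∈ P i → v ∈ P j →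
      (dist u v = Metric.diam (Set.univ : Set X) ↔ i ≠ j)) :
    centerOfDistances X =
      {Metric.diam (Set.univ : Set X)} ∪ ⋂ i, centerOfDistances (P i) := by
  ext t
  simp only [Set.mem_union, Set.mem_singleton_iff, Set.mem_iInter]
  constructor
  · intro ht
    by_cases htD : t = Metric.diam (Set.univ : Set X)
    · exact Or.inl htD
    · refine Or.inr fun i => ?_
      intro p
      obtain ⟨x, hx⟩ := ht p.1
      obtain ⟨j, hj, -⟩ := hpart x
      have hij : i = j := by
        by_contra hne'
        exact htD (hx ▸ (hdiam p.1 x i j p.2 hj).mpr hne')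
      refine ⟨⟨x, hij ▸ hj⟩, ?_⟩
      rw [Subtype.dist_eq]
      exact hx
  · rintro (ht | ht)
    · intro p
      obtain ⟨i, hi, -⟩ := hpart p
      have h2 : (2 : ℕ) ≤ k := hk
      have : Nontrivial (Fin k) := Fin.nontrivial_iff_two_le.mpr hk
      obtain ⟨j, hji⟩ := exists_ne i
      obtain ⟨q, hq⟩ := hne j
      refine ⟨q, ?_⟩
      rw [ht]
      exact (hdiam p q i j hi hq).mpr fun hij => hji hij.symm
    · intro p
      obtain ⟨i, hi, -⟩ := hpart p
      obtain ⟨x, hx⟩ := ht i ⟨p, hi⟩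
      rw [Subtype.dist_eq] at hx
      exact ⟨x.1, hx⟩
end

section
/- Let (X,d) be a finite ultrametric space with |X| ≥ 2 whose diametrical graph is complete bipartite with parts X_1 and X_2, where the subspaces X_1 and X_2 are both isometric to an ultrametric space (Y,ρ). Then |C(X)| = 1 + |C(Y)|. -/
section Isometry

variable {X Y : Type*} [MetricSpace X] [MetricSpace Y]

theorem centerOfDistances_subset_of_isometryEquiv (e : X ≃ᵢ Y) :
    centerOfDistances X ⊆ centerOfDistances Y := by
  intro t ht q
  obtain ⟨x, hx⟩ := ht (e.symm q)
  exact ⟨e x, by rw [← hx, ← e.dist_eq, e.apply_symm_apply]⟩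

theorem IsometryEquiv.centerOfDistances_eq (e : X ≃ᵢ Y) :
    centerOfDistances X = centerOfDistances Y :=
  (centerOfDistances_subset_of_isometryEquiv e).antisymm
    (centerOfDistances_subset_of_isometryEquiv e.symm)

end Isometry

theorem centerOfDistances_finite {X : Type*} [MetricSpace X] [Finite X] [Nonempty X] :
    (centerOfDistances X).Finite := by
  inhabit X
  exact (Set.finite_range (dist (default : X))).subset fun _ ht => ht default

section Split

variable {X : Type*} [MetricSpace X] {X₁ X₂ : Set X}

theorem exists_mem_dist_eq_of_mem_centerOfDistances {t : ℝ} (ht : t ∈ centerOfDistances X₁)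
    {p : X} (hp : p ∈ X₁) : ∃ x ∈ X₁, dist p x = t := by
  obtain ⟨x, hx⟩ := ht ⟨p, hp⟩
  exact ⟨x, x.2, hx⟩

theorem mem_centerOfDistances_of_union_eq_univ (hunion : X₁ ∪ X₂ = Set.univ) {t : ℝ}
    (ht₁ : t ∈ centerOfDistances X₁) (ht₂ : t ∈ centerOfDistances X₂) :
    t ∈ centerOfDistances X := by
  intro p
  rcases (hunion ▸ Set.mem_univ p : p ∈ X₁ ∪ X₂) with hp | hp
  · obtain ⟨x, -, hx⟩ := exists_mem_dist_eq_of_mem_centerOfDistances ht₁ hp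
    exact ⟨x, hx⟩
  · obtain ⟨x, -, hx⟩ := exists_mem_dist_eq_of_mem_centerOfDistances ht₂ hp
    exact ⟨x, hx⟩

variable {D : ℝ}

theorem dist_ne_of_mem_part (hdisj : Disjoint X₁ X₂)
    (hsplit : ∀ u v : X, dist u v = D → ((u ∈ X₁ ∧ v ∈ X₂) ∨ (u ∈ X₂ ∧ v ∈ X₁)))
    {u v : X} (hu : u ∈ X₁) (hv : v ∈ X₁) : dist u v ≠ D := by
  intro huv
  rcases hsplit u v huv with ⟨-, hv₂⟩ | ⟨hu₂, -⟩
  · exact Set.disjoint_left.1 hdisj hv hv₂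
  · exact Set.disjoint_left.1 hdisj hu hu₂

theorem notMem_centerOfDistances_part (hdisj : Disjoint X₁ X₂)
    (hsplit : ∀ u v : X, dist u v = D → ((u ∈ X₁ ∧ v ∈ X₂) ∨ (u ∈ X₂ ∧ v ∈ X₁)))
    (h₁ : X₁.Nonempty) : D ∉ centerOfDistances X₁ := by
  intro hD
  obtain ⟨x, hx, hdist⟩ := exists_mem_dist_eq_of_mem_centerOfDistances hD h₁.some_mem
  exact dist_ne_of_mem_part hdisj hsplit h₁.some_mem hx hdist

theorem mem_centerOfDistances_part (hunion : X₁ ∪ X₂ = Set.univ)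
    (hcross : ∀ u ∈ X₁, ∀ v ∈ X₂, dist u v = D) {t : ℝ} (ht : t ∈ centerOfDistances X)
    (htD : t ≠ D) : t ∈ centerOfDistances X₁ := by
  intro p
  obtain ⟨x, hx⟩ := ht p
  have hx₁ : x ∈ X₁ := by
    rcases (hunion ▸ Set.mem_univ x : x ∈ X₁ ∪ X₂) with hx₁ | hx₂
    · exact hx₁
    · exact absurd (hcross p p.2 x hx₂ ▸ hx.symm) htD
  exact ⟨⟨x, hx₁⟩, hx⟩

theorem centerOfDistances_eq_insert_inter (hunion : X₁ ∪ X₂ = Set.univ)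
    (hcross : ∀ u ∈ X₁, ∀ v ∈ X₂, dist u v = D) (h₁ : X₁.Nonempty) (h₂ : X₂.Nonempty) :
    centerOfDistances X = insert D (centerOfDistances X₁ ∩ centerOfDistances X₂) := by
  have hcross' : ∀ u ∈ X₂, ∀ v ∈ X₁, dist u v = D := fun u hu v hv =>
    dist_comm u v ▸ hcross v hv u hu
  have hunion' : X₂ ∪ X₁ = Set.univ := (Set.union_comm _ _).trans hunion
  ext t
  constructor
  · intro ht
    by_cases htD : t = D
    · exact Or.inl htD
    · exact Or.inr ⟨mem_centerOfDistances_part hunion hcross ht htD,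
        mem_centerOfDistances_part hunion' hcross' ht htD⟩
  · rintro (rfl | ⟨ht₁, ht₂⟩)
    · intro p
      rcases (hunion ▸ Set.mem_univ p : p ∈ X₁ ∪ X₂) with hp | hp
      · exact ⟨h₂.some, hcross p hp _ h₂.some_mem⟩
      · exact ⟨h₁.some, hcross' p hp _ h₁.some_mem⟩
    · exact mem_centerOfDistances_of_union_eq_univ hunion ht₁ ht₂

end Split

theorem card_center_bipartite_general {X : Type*} [MetricSpace X] [Fintype X]
    (Y : Type*) [MetricSpace Y]
    (X₁ X₂ : Set X) (h₁ : X₁.Nonempty) (h₂ : X₂.Nonempty)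
    (hdisj : Disjoint X₁ X₂) (hunion : X₁ ∪ X₂ = Set.univ)
    (hdiam : ∀ u v : X, dist u v = Metric.diam (Set.univ : Set X) ↔
      ((u ∈ X₁ ∧ v ∈ X₂) ∨ (u ∈ X₂ ∧ v ∈ X₁)))
    (e₁ : X₁ ≃ᵢ Y) (e₂ : X₂ ≃ᵢ Y) :
    (centerOfDistances X).ncard = 1 + (centerOfDistances Y).ncard := by
  have : Finite Y := .of_equiv _ e₁.toEquiv
  have : Nonempty Y := ⟨e₁ ⟨_, h₁.some_mem⟩⟩
  have hcross : ∀ u ∈ X₁, ∀ v ∈ X₂, dist u v = Metric.diam (Set.univ : Set X) :=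
    fun u hu v hv => (hdiam u v).2 (Or.inl ⟨hu, hv⟩)
  have hD : Metric.diam (Set.univ : Set X) ∉ centerOfDistances Y :=
    e₁.centerOfDistances_eq ▸ notMem_centerOfDistances_part hdisj (fun u v => (hdiam u v).1) h₁
  rw [centerOfDistances_eq_insert_inter hunion hcross h₁ h₂, e₁.centerOfDistances_eq,
    e₂.centerOfDistances_eq, Set.inter_self, Set.ncard_insert_of_notMem hD centerOfDistances_finite,
    add_comm]

/-- If the diametrical graph of a finite ultrametric space with at least two points
is complete bipartite with parts `X₁`, `X₂` which are both isometric to an ultrametric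
space `Y`, then `|C(X)| = 1 + |C(Y)|`. -/
theorem card_center_bipartite {X : Type*} [MetricSpace X] [Fintype X]
    [IsUltrametricDist X] (h : 2 ≤ Fintype.card X)
    (Y : Type*) [MetricSpace Y] [IsUltrametricDist Y]
    (X₁ X₂ : Set X) (h₁ : X₁.Nonempty) (h₂ : X₂.Nonempty)
    (hdisj : Disjoint X₁ X₂) (hunion : X₁ ∪ X₂ = Set.univ)
    (hdiam : ∀ u v : X, dist u v = Metric.diam (Set.univ : Set X) ↔
      ((u ∈ X₁ ∧ v ∈ X₂) ∨ (u ∈ X₂ ∧ v ∈ X₁)))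
    (e₁ : X₁ ≃ᵢ Y) (e₂ : X₂ ≃ᵢ Y) :
    (centerOfDistances X).ncard = 1 + (centerOfDistances Y).ncard :=
  card_center_bipartite_general Y X₁ X₂ h₁ h₂ hdisj hunion hdiam e₁ e₂
end

section
/- For every finite ultrametric space (X,d) with |X| ≥ 2 there exists a finite ultrametric space (Y,ρ) with |Y| = 1 + |X| and C(Y) = C(X). -/
section Ext
variable {X : Type*} [MetricSpace X] [IsUltrametricDist X]

private def extDist (p0 : X) (ε : ℝ) : Option X → Option X → ℝ
  | some a, some b => dist a b
  | some a, none => max ε (dist p0 a)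
  | none, some b => max ε (dist p0 b)
  | none, none => 0

omit [IsUltrametricDist X] in
private theorem extDist_nonneg (p0 : X) (ε : ℝ) (hε : 0 ≤ ε) (x y : Option X) :
    0 ≤ extDist p0 ε x y := by
  rcases x with _|a <;> rcases y with _|b <;>
    simp [extDist, dist_nonneg, le_max_iff, hε]

private theorem extDist_ultra (p0 : X) (ε : ℝ) (hε : 0 ≤ ε) (x y z : Option X) :
    extDist p0 ε x z ≤ max (extDist p0 ε x y) (extDist p0 ε y z) := by
  have U := fun a b c : X => IsUltrametricDist.dist_triangle_max a b c
  rcases x with _|a <;> rcases y with _|b <;> rcases z with _|c <;> simp only [extDist]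
  · simp
  · exact le_max_of_le_right le_rfl
  · positivity
  · refine max_le (le_max_of_le_left (le_max_left _ _)) ?_
    exact (U p0 b c).trans (max_le_max (le_max_right _ _) le_rfl)
  · exact le_max_of_le_left le_rfl
  · refine (U a p0 c).trans ?_
    rw [dist_comm a p0]
    exact max_le_max (le_max_right _ _) (le_max_right _ _)
  · refine max_le (le_max_of_le_right (le_max_left _ _)) ?_
    have := (U p0 b a).trans (max_le_max (le_max_right ε _) le_rfl)
    rw [dist_comm b a] at this
    exact this.trans (by rw [max_comm])
  · exact U a b c

private def extMetric (p0 : X) (ε : ℝ) (hε : 0 < ε) : MetricSpace (Option X) where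
  dist := extDist p0 ε
  dist_self x := by rcases x with _|a <;> simp [extDist]
  dist_comm x y := by rcases x with _|a <;> rcases y with _|b <;> simp [extDist, dist_comm]
  dist_triangle x y z := by
    show extDist p0 ε x z ≤ extDist p0 ε x y + extDist p0 ε y z
    refine (extDist_ultra p0 ε hε.le x y z).trans (max_le ?_ ?_)
    · have := extDist_nonneg p0 ε hε.le y z; linarith
    · have := extDist_nonneg p0 ε hε.le x y; linarith
  eq_of_dist_eq_zero := by
    intro x y hxy
    rcases x with _|a <;> rcases y with _|b <;> simp_all [extDist, le_antisymm_iff]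
    · exact absurd hxy.1 (by linarith)
    · exact absurd hxy.1 (by linarith)

end Ext

/-- Every finite ultrametric space with at least two points can be extended by one
point while preserving the center of distances. -/
theorem exists_extension_same_center {X : Type*} [MetricSpace X] [Fintype X]
    [IsUltrametricDist X] (h : 2 ≤ Fintype.card X) :
    ∃ (Y : Type) (_ : MetricSpace Y) (_ : Fintype Y),
      IsUltrametricDist Y ∧ Fintype.card Y = 1 + Fintype.card X ∧
        centerOfDistances Y = centerOfDistances X := by
  classical
  set n := Fintype.card X with hn
  let e : X ≃ Fin n := Fintype.equivFin X
  letI : MetricSpace (Fin n) := MetricSpace.induced e.symm e.symm.injective inferInstance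
  have hdist : ∀ a b : Fin n, dist a b = dist (e.symm a) (e.symm b) := fun _ _ => rfl
  haveI : IsUltrametricDist (Fin n) :=
    ⟨fun a b c => IsUltrametricDist.dist_triangle_max (e.symm a) (e.symm b) (e.symm c)⟩
  -- minimal positive distance
  obtain ⟨x₀, y₀, hxy₀⟩ : ∃ x y : X, x ≠ y := Fintype.exists_pair_of_one_lt_card h
  let s : Finset ℝ :=
    ((Finset.univ ×ˢ Finset.univ : Finset (X × X)).filter (fun p => p.1 ≠ p.2)).image
      (fun p => dist p.1 p.2)
  have hs : s.Nonempty := ⟨dist x₀ y₀, Finset.mem_image.2 ⟨(x₀, y₀), by simp [hxy₀], rfl⟩⟩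
  set m : ℝ := s.min' hs with hm
  have hmpos : 0 < m := by
    have := s.min'_mem hs
    simp only [s, Finset.mem_image, Finset.mem_filter] at this
    obtain ⟨⟨a, b⟩, ⟨-, hab⟩, hd⟩ := this
    rw [hm, ← hd]
    exact dist_pos.2 hab
  have hmle : ∀ x y : X, x ≠ y → m ≤ dist x y := by
    intro x y hxy
    exact s.min'_le _ (Finset.mem_image.2 ⟨(x, y), by simp [hxy], rfl⟩)
  set ε : ℝ := m / 2 with hε
  have hεpos : 0 < ε := by positivity
  have hεlt : ε < m := by rw [hε]; linarith
  set p0 : Fin n := e x₀ with hp0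
  letI instY : MetricSpace (Option (Fin n)) := extMetric p0 ε hεpos
  refine ⟨Option (Fin n), instY, inferInstance, ?_, ?_, ?_⟩
  · exact ⟨fun x y z => extDist_ultra p0 ε hεpos.le x y z⟩
  · simp [add_comm]
  · have hdYss : ∀ a b : Fin n, dist (some a : Option (Fin n)) (some b) = dist a b :=
      fun _ _ => rfl
    have hdYn : ∀ a : Fin n, dist (none : Option (Fin n)) (some a) = max ε (dist p0 a) :=
      fun _ => rfl
    have hdYn' : ∀ a : Fin n, dist (some a : Option (Fin n)) none = max ε (dist p0 a) :=
      fun _ => rfl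
    -- distances from a point ≠ p0 are 0 or ≥ m
    have key : ∀ a : Fin n, a ≠ p0 → ∀ q : Option (Fin n),
        dist (some a : Option (Fin n)) q = 0 ∨ m ≤ dist (some a : Option (Fin n)) q := by
      intro a ha q
      rcases q with _|b
      · right
        rw [hdYn']
        refine le_max_of_le_right ?_
        rw [hdist]
        exact hmle _ _ (fun hh => ha (e.symm.injective hh).symm)
      · rcases eq_or_ne a b with rfl | hab
        · left; simp
        · right
          rw [hdYss, hdist]
          exact hmle _ _ (fun hh => hab (e.symm.injective hh))
    ext t
    simp only [centerOfDistances, Set.mem_setOf_eq]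
    constructor
    · intro ht p
      rcases eq_or_ne t 0 with rfl | ht0
      · exact ⟨p, dist_self p⟩
      obtain ⟨q, hq⟩ := ht (some (e p))
      rcases q with _|b
      · rw [hdYn'] at hq
        rcases max_cases ε (dist p0 (e p)) with ⟨h1, h2⟩ | ⟨h1, h2⟩
        · -- t = ε : impossible, pick a point ≠ p0
          exfalso
          have htε : t = ε := by rw [← hq, h1]
          set a : Fin n := e y₀ with hay
          have hap0 : a ≠ p0 := fun hh => hxy₀ (e.injective hh).symm
          obtain ⟨q', hq'⟩ := ht (some a)
          rcases key a hap0 q' with h0 | hge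
          · rw [hq', htε] at h0; exact hεpos.ne' h0
          · rw [hq', htε] at hge; linarith
        · have ht' : t = dist p0 (e p) := by rw [← hq, h1]
          refine ⟨x₀, ?_⟩
          rw [ht', hdist]
          simp [hp0, dist_comm]
      · exact ⟨e.symm b, by rw [← hq, hdYss, hdist]; simp⟩
    · intro ht p
      rcases p with _|a
      · rcases eq_or_ne t 0 with rfl | ht0
        · exact ⟨none, dist_self _⟩
        obtain ⟨x, hx⟩ := ht x₀
        have hxne : x₀ ≠ x := by
          intro hh; rw [← hh, dist_self] at hx; exact ht0 hx.symm
        refine ⟨some (e x), ?_⟩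
        have h1 : dist p0 (e x) = dist x₀ x := by rw [hdist]; simp [hp0]
        rw [hdYn, h1, hx]
        exact max_eq_right (hεlt.le.trans (hx ▸ hmle _ _ hxne))
      · obtain ⟨x, hx⟩ := ht (e.symm a)
        exact ⟨some (e x), by rw [hdYss, hdist]; simpa using hx⟩
end

section
/- For every finite ultrametric space (X,d) with |X| = n ≥ 1, the cardinality of the center of distances satisfies |C(X)| ≤ 1 + ⌊log₂ n⌋. -/
open Metric

section

variable {X : Type*} [MetricSpace X]

def RealizesDistances (A : Finset X) (T : Set ℝ) : Prop :=
  ∀ t ∈ T, ∀ p ∈ A, ∃ x ∈ A, dist p x = t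

lemma RealizesDistances.mono {A : Finset X} {T T' : Set ℝ} (h : RealizesDistances A T)
    (hT : T' ⊆ T) : RealizesDistances A T' :=
  fun t ht => h t (hT ht)

lemma realizesDistances_univ_centerOfDistances [Fintype X] :
    RealizesDistances (Finset.univ : Finset X) (centerOfDistances X) := by
  intro t ht p _
  obtain ⟨x, hx⟩ := ht p
  exact ⟨x, Finset.mem_univ x, hx⟩

lemma centerOfDistances_subset_range_dist (p : X) : centerOfDistances X ⊆ Set.range (dist p) :=
  fun _ ht => ht p

lemma finite_centerOfDistances [Finite X] [Nonempty X] : (centerOfDistances X).Finite :=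
  (Set.finite_range _).subset (centerOfDistances_subset_range_dist (Classical.arbitrary X))

lemma pos_of_mem_centerOfDistances_sdiff_zero [Nonempty X] {t : ℝ}
    (ht : t ∈ centerOfDistances X \ {0}) : 0 < t := by
  obtain ⟨x, hx⟩ := ht.1 (Classical.arbitrary X)
  exact lt_of_le_of_ne (hx ▸ dist_nonneg) (Ne.symm ht.2)

section Ultrametric

variable [IsUltrametricDist X]

lemma IsUltrametricDist.disjoint_ball_of_le_dist {p q : X} {r : ℝ} (h : r ≤ dist p q) :
    Disjoint (ball p r) (ball q r) :=
  Set.disjoint_left.mpr fun x hp hq =>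
    (h.trans (IsUltrametricDist.dist_triangle_max p x q)).not_gt
      (max_lt (mem_ball'.mp hp) (mem_ball.mp hq))

open Classical in
lemma RealizesDistances.filter_mem_ball {A : Finset X} {T : Set ℝ} {r : ℝ}
    (h : RealizesDistances A T) (hT : ∀ s ∈ T, s < r) (c : X) :
    RealizesDistances (A.filter (· ∈ ball c r)) T := by
  intro s hs p hp
  rw [Finset.mem_filter] at hp
  obtain ⟨y, hy, hpy⟩ := h s hs p hp.1
  refine ⟨y, Finset.mem_filter.mpr ⟨hy, ?_⟩, hpy⟩
  rw [mem_ball, dist_comm] at hp ⊢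
  exact (IsUltrametricDist.dist_triangle_max c p y).trans_lt (max_lt hp.2 (hpy ▸ hT s hs))

lemma RealizesDistances.two_pow_card_le {T : Finset ℝ} (hT : ∀ t ∈ T, 0 < t) :
    ∀ {A : Finset X}, A.Nonempty → RealizesDistances A T → 2 ^ T.card ≤ A.card := by
  classical
  induction T using Finset.induction_on_max with
  | empty => exact fun hA _ => by simpa using hA.card_pos
  | insert t T hmax ih =>
    intro A hA h
    have ht : 0 < t := hT t (Finset.mem_insert_self t T)
    have hT' : ∀ s ∈ T, 0 < s := fun s hs => hT s (Finset.mem_insert_of_mem hs)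
    have hsub : RealizesDistances A T :=
      h.mono (by simp only [Finset.coe_insert, Set.subset_insert])
    obtain ⟨p, hp⟩ := hA
    obtain ⟨q, hq, hpq⟩ := h t (Finset.mem_insert_self t T) p hp
    have hball : ∀ c ∈ A, 2 ^ T.card ≤ (A.filter (· ∈ ball c t)).card := fun c hc =>
      ih hT' ⟨c, Finset.mem_filter.mpr ⟨hc, mem_ball_self ht⟩⟩ (hsub.filter_mem_ball hmax c)
    have hdisj : Disjoint (A.filter (· ∈ ball p t)) (A.filter (· ∈ ball q t)) :=
      Finset.disjoint_filter_filter' _ _ (IsUltrametricDist.disjoint_ball_of_le_dist hpq.ge)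
    calc 2 ^ (insert t T).card = 2 ^ T.card + 2 ^ T.card := by
          rw [Finset.card_insert_of_notMem fun htT => (hmax t htT).false, pow_succ, mul_two]
      _ ≤ (A.filter (· ∈ ball p t)).card + (A.filter (· ∈ ball q t)).card :=
          add_le_add (hball p hp) (hball q hq)
      _ = (A.filter (· ∈ ball p t) ∪ A.filter (· ∈ ball q t)).card :=
          (Finset.card_union_of_disjoint hdisj).symm
      _ ≤ A.card :=
          Finset.card_le_card (Finset.union_subset (A.filter_subset _) (A.filter_subset _))

lemma two_pow_ncard_centerOfDistances_sdiff_zero_le [Fintype X] [Nonempty X] :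
    2 ^ (centerOfDistances X \ {0}).ncard ≤ Fintype.card X := by
  have hfin := (finite_centerOfDistances (X := X)).sdiff (t := {0})
  rw [Set.ncard_eq_toFinset_card _ hfin, ← Finset.card_univ]
  refine RealizesDistances.two_pow_card_le
    (fun t ht => pos_of_mem_centerOfDistances_sdiff_zero (hfin.mem_toFinset.mp ht))
    Finset.univ_nonempty (realizesDistances_univ_centerOfDistances.mono ?_)
  simp only [Set.Finite.coe_toFinset, Set.sdiff_subset]

end Ultrametric

end

/-- For every finite ultrametric space with `n ≥ 1` points, `|C(X)| ≤ 1 + ⌊log₂ n⌋`. -/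
theorem card_center_le_log {X : Type*} [MetricSpace X] [Fintype X]
    [IsUltrametricDist X] (n : ℕ) (hn : 1 ≤ n) (hcard : Fintype.card X = n) :
    (centerOfDistances X).ncard ≤ 1 + Nat.log 2 n := by
  have : Nonempty X := Fintype.card_pos_iff.mp (hcard ▸ hn)
  have hlog : (centerOfDistances X \ {0}).ncard ≤ Nat.log 2 n :=
    Nat.le_log_of_pow_le one_lt_two (hcard ▸ two_pow_ncard_centerOfDistances_sdiff_zero_le)
  calc (centerOfDistances X).ncard
      ≤ (centerOfDistances X \ {0}).ncard + ({0} : Set ℝ).ncard :=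
        Set.ncard_le_ncard_sdiff_add_ncard _ _
    _ ≤ 1 + Nat.log 2 n := by rw [Set.ncard_singleton]; omega
end

section
/- For every integer n ≥ 1 there exists a finite ultrametric space (Y,ρ) with |Y| = n and |C(Y)| = 1 + ⌊log₂ n⌋. -/
namespace CenterLogAux

/-- `ee k a b` is the largest `j ≤ k` with `2^j ∣ a - b`. -/
def ee (k : ℕ) (a b : ℤ) : ℕ := Nat.findGreatest (fun j => (2:ℤ)^j ∣ a - b) k

lemma ee_le (k : ℕ) (a b : ℤ) : ee k a b ≤ k := Nat.findGreatest_le k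

lemma ee_spec (k : ℕ) (a b : ℤ) : (2:ℤ)^(ee k a b) ∣ a - b :=
  Nat.findGreatest_spec (P := fun j => (2:ℤ)^j ∣ a - b) (Nat.zero_le k) (by simp)

lemma le_ee {k j : ℕ} {a b : ℤ} (hj : j ≤ k) (h : (2:ℤ)^j ∣ a - b) : j ≤ ee k a b :=
  Nat.le_findGreatest hj h

lemma ee_symm (k : ℕ) (a b : ℤ) : ee k a b = ee k b a := by
  refine le_antisymm (le_ee (ee_le k a b) ?_) (le_ee (ee_le k b a) ?_)
  · exact (dvd_sub_comm).mp (ee_spec k a b)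
  · exact (dvd_sub_comm).mp (ee_spec k b a)

lemma min_le_ee (k : ℕ) (a b c : ℤ) : min (ee k a b) (ee k b c) ≤ ee k a c := by
  refine le_ee (le_trans (min_le_left _ _) (ee_le k a b)) ?_
  have h1 : (2:ℤ)^(min (ee k a b) (ee k b c)) ∣ a - b :=
    dvd_trans (pow_dvd_pow 2 (min_le_left _ _)) (ee_spec k a b)
  have h2 : (2:ℤ)^(min (ee k a b) (ee k b c)) ∣ b - c :=
    dvd_trans (pow_dvd_pow 2 (min_le_right _ _)) (ee_spec k b c)
  have h : a - c = (a - b) + (b - c) := by ring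
  rw [h]; exact dvd_add h1 h2

variable (n k : ℕ)

/-- The ultrametric distance on `Fin n`. -/
def d (x y : Fin n) : ℝ := if x = y then 0 else ((k + 1 - ee k x y : ℕ) : ℝ)

lemma d_self (x : Fin n) : d n k x x = 0 := by simp [d]

lemma d_of_ne {x y : Fin n} (h : x ≠ y) :
    d n k x y = ((k + 1 - ee k x y : ℕ) : ℝ) := by
  rw [d, if_neg h]

lemma d_pos_of_ne {x y : Fin n} (h : x ≠ y) : 0 < d n k x y := by
  rw [d_of_ne n k h]
  have h1 := ee_le k (x : ℤ) (y : ℤ)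
  have h2 : 1 ≤ k + 1 - ee k (x : ℤ) (y : ℤ) := by omega
  exact_mod_cast Nat.lt_of_lt_of_le Nat.zero_lt_one h2

lemma d_nonneg (x y : Fin n) : 0 ≤ d n k x y := by
  rcases eq_or_ne x y with rfl | h
  · simp [d_self]
  · exact le_of_lt (d_pos_of_ne n k h)

lemma d_comm (x y : Fin n) : d n k x y = d n k y x := by
  rcases eq_or_ne x y with rfl | h
  · rfl
  · rw [d_of_ne n k h, d_of_ne n k (Ne.symm h), ee_symm]

lemma d_max (x y z : Fin n) : d n k x z ≤ max (d n k x y) (d n k y z) := by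
  rcases eq_or_ne x z with rfl | hxz
  · exact le_trans (le_of_eq (d_self n k x)) (le_trans (d_nonneg n k x y) (le_max_left _ _))
  rcases eq_or_ne x y with rfl | hxy
  · exact le_max_right _ _
  rcases eq_or_ne y z with rfl | hyz
  · exact le_max_left _ _
  rw [d_of_ne n k hxz, d_of_ne n k hxy, d_of_ne n k hyz]
  have hmin := min_le_ee k (x : ℤ) (y : ℤ) (z : ℤ)
  rcases le_total (ee k (x:ℤ) (y:ℤ)) (ee k (y:ℤ) (z:ℤ)) with h | h
  · refine le_trans ?_ (le_max_left _ _)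
    have hle : k + 1 - ee k (x:ℤ) (z:ℤ) ≤ k + 1 - ee k (x:ℤ) (y:ℤ) := by
      simp only [min_eq_left h] at hmin; omega
    exact_mod_cast hle
  · refine le_trans ?_ (le_max_right _ _)
    have hle : k + 1 - ee k (x:ℤ) (z:ℤ) ≤ k + 1 - ee k (y:ℤ) (z:ℤ) := by
      simp only [min_eq_right h] at hmin; omega
    exact_mod_cast hle

lemma d_triangle (x y z : Fin n) : d n k x z ≤ d n k x y + d n k y z := by
  refine le_trans (d_max n k x y z) ?_
  have h1 := d_nonneg n k x y
  have h2 := d_nonneg n k y z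
  rcases le_total (d n k x y) (d n k y z) with h | h
  · rw [max_eq_right h]; linarith
  · rw [max_eq_left h]; linarith

/-- The metric space structure on `Fin n`. -/
def ms : MetricSpace (Fin n) :=
  { dist := d n k
    dist_self := d_self n k
    dist_comm := d_comm n k
    dist_triangle := d_triangle n k
    eq_of_dist_eq_zero := fun {x y} h => by
      by_contra hne
      exact absurd h (ne_of_gt (d_pos_of_ne n k hne)) }

end CenterLogAux

open CenterLogAux in
/-- For every `n ≥ 1` there is an `n`-point ultrametric space whose center of distances
has exactly `1 + ⌊log₂ n⌋` elements. -/
theorem exists_space_card_center_eq_log (n : ℕ) (hn : 1 ≤ n) :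
    ∃ (Y : Type) (_ : MetricSpace Y) (_ : Fintype Y),
      IsUltrametricDist Y ∧ Fintype.card Y = n ∧
        (centerOfDistances Y).ncard = 1 + Nat.log 2 n := by
  set k := Nat.log 2 n with hk
  have hkn : 2 ^ k ≤ n := Nat.pow_log_le_self 2 (by omega)
  have hnk : n < 2 ^ (k + 1) := Nat.lt_pow_succ_log_self (by norm_num) n
  letI M : MetricSpace (Fin n) := ms n k
  have hdist : ∀ x y : Fin n, dist x y = d n k x y := fun _ _ => rfl
  refine ⟨Fin n, M, inferInstance, ⟨fun x y z => d_max n k x y z⟩, Fintype.card_fin n, ?_⟩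
  -- the special point `2^k - 1`
  have hp : 2 ^ k - 1 < n := by omega
  set p₀ : Fin n := ⟨2 ^ k - 1, hp⟩ with hp₀
  -- from p₀, no point is at ee-level k
  have hnolevel : ∀ y : Fin n, y ≠ p₀ → ee k (p₀ : ℤ) (y : ℤ) ≠ k := by
    intro y hy hee
    have hdvd : (2:ℤ) ^ k ∣ (p₀ : ℤ) - (y : ℤ) := hee ▸ ee_spec k _ _
    have h0 : (p₀ : ℤ) - (y : ℤ) = 0 := by
      refine Int.eq_zero_of_abs_lt_dvd hdvd ?_
      have hy1 : (y : ℤ) ≤ (n : ℤ) - 1 := by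
        have := y.isLt; omega
      have hp1 : (p₀ : ℤ) = 2 ^ k - 1 := by
        have h1 : (1:ℕ) ≤ 2 ^ k := Nat.one_le_two_pow
        simp only [hp₀]
        push_cast [h1]
        ring
      have hn2 : (n : ℤ) < 2 ^ (k + 1) := by exact_mod_cast hnk
      have h2 : ((2:ℤ)) ^ (k+1) = 2 * 2 ^ k := by ring
      have h2k : (0:ℤ) < 2 ^ k := by positivity
      rw [abs_lt]
      omega
    apply hy
    apply Fin.ext
    omega
  -- characterization of the center
  have hcen : centerOfDistances (Fin n) =
      ((insert 0 (Finset.Icc 2 (k + 1))).image (fun j : ℕ => (j : ℝ)) : Finset ℝ) := by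
    ext t
    constructor
    · intro ht
      obtain ⟨y, hy⟩ := ht p₀
      rw [hdist] at hy
      simp only [Finset.coe_image, Set.mem_image, Finset.mem_coe, Finset.mem_insert,
        Finset.mem_Icc]
      rcases eq_or_ne p₀ y with rfl | hne
      · exact ⟨0, Or.inl rfl, by rw [← hy, d_self]; simp⟩
      · have hee : ee k (p₀ : ℤ) (y : ℤ) < k :=
          lt_of_le_of_ne (ee_le k _ _) (hnolevel y (Ne.symm hne))
        exact ⟨k + 1 - ee k (p₀ : ℤ) (y : ℤ), Or.inr (by omega),
          by rw [← hy, d_of_ne n k hne]⟩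
    · intro ht
      simp only [Finset.coe_image, Set.mem_image, Finset.mem_coe, Finset.mem_insert,
        Finset.mem_Icc] at ht
      obtain ⟨j, hj, rfl⟩ := ht
      rcases hj with rfl | ⟨hj2, hjk⟩
      · intro p; exact ⟨p, by rw [hdist, d_self]; simp⟩
      · -- j with 2 ≤ j ≤ k+1 is in the center
        intro p
        set e₀ : ℕ := k + 1 - j with he₀
        have he₀k : e₀ < k := by omega
        have hlt : ((p : ℕ) + 2 ^ e₀) % 2 ^ (e₀ + 1) < n := by
          calc ((p : ℕ) + 2 ^ e₀) % 2 ^ (e₀ + 1) < 2 ^ (e₀ + 1) :=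
                Nat.mod_lt _ (by positivity)
            _ ≤ 2 ^ k := Nat.pow_le_pow_right (by norm_num) (by omega)
            _ ≤ n := hkn
        set y : Fin n := ⟨((p : ℕ) + 2 ^ e₀) % 2 ^ (e₀ + 1), hlt⟩ with hy
        have hyz : (y : ℤ) = ((p : ℤ) + 2 ^ e₀) % 2 ^ (e₀ + 1) := by
          simp only [hy]
          push_cast
          rfl
        have hM : (2:ℤ) ^ (e₀ + 1) ∣ ((p : ℤ) + 2 ^ e₀) - (y : ℤ) := by
          refine ⟨((p : ℤ) + 2 ^ e₀) / 2 ^ (e₀ + 1), ?_⟩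
          rw [hyz, Int.emod_def]
          ring
        have hdvd : (2:ℤ) ^ e₀ ∣ (p : ℤ) - (y : ℤ) := by
          have heq : (p : ℤ) - (y : ℤ) = (((p : ℤ) + 2 ^ e₀) - (y : ℤ)) - 2 ^ e₀ := by ring
          rw [heq]
          exact dvd_sub (dvd_trans (pow_dvd_pow 2 (Nat.le_succ e₀)) hM) dvd_rfl
        have hndvd : ¬ (2:ℤ) ^ (e₀ + 1) ∣ (p : ℤ) - (y : ℤ) := by
          intro h
          have hd2 : (2:ℤ) ^ (e₀ + 1) ∣ 2 ^ e₀ := by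
            have heq : (2:ℤ) ^ e₀ = (((p : ℤ) + 2 ^ e₀) - (y : ℤ)) - ((p : ℤ) - (y : ℤ)) := by
              ring
            rw [heq]; exact dvd_sub hM h
          have hle : (2:ℤ) ^ (e₀ + 1) ≤ 2 ^ e₀ :=
            Int.le_of_dvd (by positivity) hd2
          have hlt2 : (2:ℤ) ^ e₀ < 2 ^ (e₀ + 1) := by
            have h21 : (2:ℤ) ^ (e₀+1) = 2 * 2 ^ e₀ := by ring
            have h2k : (0:ℤ) < 2 ^ e₀ := by positivity
            omega
          omega
        have hne : p ≠ y := by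
          intro h
          apply hndvd
          rw [h, sub_self]
          exact dvd_zero _
        have heeq : ee k (p : ℤ) (y : ℤ) = e₀ := by
          refine le_antisymm ?_ (le_ee (by omega) hdvd)
          by_contra h
          push_neg at h
          exact hndvd (dvd_trans (pow_dvd_pow 2 h) (ee_spec k _ _))
        refine ⟨y, ?_⟩
        rw [hdist, d_of_ne n k hne, heeq]
        norm_cast
        omega
  rw [hcen, Set.ncard_coe_finset,
    Finset.card_image_of_injective _ (fun a b h => by exact_mod_cast h),
    Finset.card_insert_of_notMem (by simp), Nat.card_Icc]
  omega
end

section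
/- Let m ≥ 1 be an integer and let (X,d) be a finite ultrametric space with |C(X)| = m, where C(X) is the center of distances of (X,d). Then |X| ≥ 2^{m-1}. -/
/-!
Let `t = max C(X)` and `t₁ > t₂ > ⋯` be the other elements of `C(X)`. Around any point `x` there
is a point `y` with `d(x, y) = t`; in an ultrametric space the closed balls of radius `t₁ < t`
about `x` and `y` are disjoint and both lie in the closed ball of radius `t` about `x`. Iterating,
the ball of radius `t` contains at least `2 ^ (m - 1)` points.
-/

open Metric

theorem IsUltrametricDist.disjoint_closedBall_of_lt_dist {X : Type*} [PseudoMetricSpace X]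
    [IsUltrametricDist X] {x y : X} {r : ℝ} (h : r < dist x y) :
    Disjoint (closedBall x r) (closedBall y r) := by
  refine Set.disjoint_left.mpr fun z hxz hyz ↦ h.not_ge ?_
  rw [mem_closedBall'] at hxz
  exact (dist_triangle_max x z y).trans (max_le hxz hyz)

theorem nonempty_of_finite_centerOfDistances {X : Type*} [MetricSpace X]
    (h : (centerOfDistances X).Finite) : Nonempty X := by
  by_contra hX
  rw [not_nonempty_iff] at hX
  exact Set.infinite_univ (h.subset fun _ _ p ↦ isEmptyElim p)

theorem two_pow_card_le_ncard_closedBall {X : Type*} [MetricSpace X] [Finite X]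
    [IsUltrametricDist X] (S : Finset ℝ) (hS : ↑S ⊆ centerOfDistances X) {t : ℝ}
    (ht : t ∈ centerOfDistances X) (hSt : ∀ s ∈ S, s < t) (x : X) :
    2 ^ S.card ≤ (closedBall x t).ncard := by
  induction S using Finset.induction_on_max generalizing t x with
  | empty =>
    obtain ⟨y, rfl⟩ := ht x
    exact (Set.ncard_pos (Set.toFinite _)).mpr ⟨x, mem_closedBall_self dist_nonneg⟩
  | insert a S hlt ih =>
    obtain ⟨y, rfl⟩ := ht x
    have ha : a < dist x y := hSt a (Finset.mem_insert_self a S)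
    have hball := ih ((Finset.coe_subset.mpr (Finset.subset_insert a S)).trans hS)
      (hS (Finset.mem_insert_self a S)) hlt
    have hsub : closedBall x a ∪ closedBall y a ⊆ closedBall x (dist x y) :=
      Set.union_subset (closedBall_subset_closedBall ha.le) <|
        (closedBall_subset_closedBall ha.le).trans
          (IsUltrametricDist.closedBall_eq_of_mem (mem_closedBall'.mpr le_rfl)).symm.subset
    rw [Finset.card_insert_of_notMem fun h ↦ (hlt a h).false]
    calc 2 ^ (S.card + 1) = 2 ^ S.card + 2 ^ S.card := by ring
      _ ≤ (closedBall x a).ncard + (closedBall y a).ncard := add_le_add (hball x) (hball y)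
      _ = (closedBall x a ∪ closedBall y a).ncard :=
        (Set.ncard_union_eq (IsUltrametricDist.disjoint_closedBall_of_lt_dist ha)).symm
      _ ≤ (closedBall x (dist x y)).ncard := Set.ncard_le_ncard hsub

/-- If `|C(X)| = m ≥ 1` for a finite ultrametric space `X`, then `|X| ≥ 2^(m-1)`. -/
theorem card_ge_of_card_center {X : Type*} [MetricSpace X] [Fintype X]
    [IsUltrametricDist X] (m : ℕ) (hm : 1 ≤ m)
    (hC : (centerOfDistances X).ncard = m) :
    2 ^ (m - 1) ≤ Fintype.card X := by
  have hfin : (centerOfDistances X).Finite := Set.finite_of_ncard_ne_zero (by omega)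
  obtain ⟨x⟩ := nonempty_of_finite_centerOfDistances hfin
  set F := hfin.toFinset
  have hF : F.Nonempty := Finset.card_pos.mp (by rw [← Set.ncard_eq_toFinset_card _ hfin]; omega)
  have hmax : F.max' hF ∈ centerOfDistances X := hfin.mem_toFinset.mp (F.max'_mem hF)
  have hball := two_pow_card_le_ncard_closedBall (F.erase (F.max' hF))
    (fun s hs ↦ hfin.mem_toFinset.mp (Finset.mem_of_mem_erase hs)) hmax
    (fun s ↦ F.lt_max'_of_mem_erase_max' hF) x
  rw [Finset.card_erase_of_mem (F.max'_mem hF), ← Set.ncard_eq_toFinset_card _ hfin, hC] at hball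
  calc 2 ^ (m - 1) ≤ (closedBall x (F.max' hF)).ncard := hball
    _ ≤ Nat.card X := Set.ncard_le_card _
    _ = Fintype.card X := Nat.card_eq_fintype_card
end

section
/- Let (Y_1,ρ_1) and (Y_2,ρ_2) be disjoint finite ultrametric spaces with diam Y_1 = diam Y_2 that are isometric to each other, let t* > diam Y_1, and let (Y,ρ) be the amalgam with Y = Y_1 ∪ Y_2, ρ equal to ρ_i inside Y_i and t* across. Then |C(Y)| = 1 + |C(Y_1)|. -/
/-- The amalgam distance on the disjoint union `Y₁ ⊕ Y₂`: the original distances inside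
each piece and the constant `t` across. -/
def amalgamDist {Y₁ Y₂ : Type*} [MetricSpace Y₁] [MetricSpace Y₂] (t : ℝ) :
    Y₁ ⊕ Y₂ → Y₁ ⊕ Y₂ → ℝ
  | Sum.inl a, Sum.inl b => dist a b
  | Sum.inr a, Sum.inr b => dist a b
  | _, _ => t

/-- If two disjoint isometric finite ultrametric spaces of equal diameter are glued at
mutual distance `t > diam Y₁`, then the center of distances of the amalgam has exactly
`1 + |C(Y₁)|` elements. -/
theorem card_center_amalgam {Y₁ Y₂ : Type*} [MetricSpace Y₁] [MetricSpace Y₂]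
    [Fintype Y₁] [Fintype Y₂] [Nonempty Y₁] [Nonempty Y₂]
    [IsUltrametricDist Y₁] [IsUltrametricDist Y₂]
    (hdiam : Metric.diam (Set.univ : Set Y₁) = Metric.diam (Set.univ : Set Y₂))
    (e : Y₁ ≃ᵢ Y₂)
    (t : ℝ) (ht : Metric.diam (Set.univ : Set Y₁) < t) :
    {s : ℝ | ∀ p : Y₁ ⊕ Y₂, ∃ x : Y₁ ⊕ Y₂, amalgamDist t p x = s}.ncard
      = 1 + (centerOfDistances Y₁).ncard := by
  classical
  obtain ⟨a₁⟩ := ‹Nonempty Y₁›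
  have hdist_lt : ∀ a b : Y₁, dist a b < t := fun a b =>
    lt_of_le_of_lt
      (Metric.dist_le_diam_of_mem Set.finite_univ.isBounded (Set.mem_univ a) (Set.mem_univ b)) ht
  have hset : {s : ℝ | ∀ p : Y₁ ⊕ Y₂, ∃ x : Y₁ ⊕ Y₂, amalgamDist t p x = s}
      = insert t (centerOfDistances Y₁) := by
    ext s
    simp only [Set.mem_setOf_eq, Set.mem_insert_iff]
    constructor
    · intro h
      by_cases hs : s = t
      · exact Or.inl hs
      · right
        intro p
        obtain ⟨x, hx⟩ := h (Sum.inl p)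
        cases x with
        | inl b => exact ⟨b, hx⟩
        | inr b =>
          exact absurd hx (by simpa [amalgamDist] using fun h' => hs h'.symm)
    · rintro (rfl | hs)
      · intro p
        cases p with
        | inl a => exact ⟨Sum.inr (e a), rfl⟩
        | inr a => exact ⟨Sum.inl a₁, rfl⟩
      · intro p
        cases p with
        | inl a => obtain ⟨x, hx⟩ := hs a; exact ⟨Sum.inl x, hx⟩
        | inr a =>
          obtain ⟨x, hx⟩ := hs (e.symm a)
          refine ⟨Sum.inr (e x), ?_⟩
          have : dist a (e x) = dist (e.symm a) x := by
            conv_lhs => rw [show a = e (e.symm a) by simp]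
            exact e.dist_eq _ _
          simpa [amalgamDist, this] using hx
  have hfin : (centerOfDistances Y₁).Finite := by
    apply (Set.finite_range (dist a₁)).subset
    intro s hs
    obtain ⟨x, hx⟩ := hs a₁
    exact ⟨x, hx⟩
  have hnot : t ∉ centerOfDistances Y₁ := by
    intro h
    obtain ⟨x, hx⟩ := h a₁
    exact absurd hx (ne_of_lt (hdist_lt a₁ x))
  rw [hset, Set.ncard_insert_of_notMem hnot hfin]
  exact Nat.add_comm _ _
end

section
/- Let (X,d) be a finite ultrametric space with |X| ≥ 2 whose diametrical graph is complete k-partite with parts X_1,…,X_k. If t ∈ C(X) and t ≠ diam X, then t ∈ C(X_i) for every i ∈ {1,…,k}. -/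
/-- If the diametrical graph of a finite ultrametric space with at least two points is
complete `k`-partite with parts `P 0, …, P (k-1)`, then every `t ∈ C(X)` with
`t ≠ diam X` belongs to `C(P i)` for every `i`. -/
theorem mem_center_parts {X : Type*} [MetricSpace X] [Fintype X] [IsUltrametricDist X]
    (h : 2 ≤ Fintype.card X) (k : ℕ) (hk : 2 ≤ k) (P : Fin k → Set X)
    (hne : ∀ i, (P i).Nonempty)
    (hpart : ∀ x : X, ∃! i, x ∈ P i)
    (hdiam : ∀ (u v : X) (i j : Fin k), u ∈ P i → v ∈ P j →
      (dist u v = Metric.diam (Set.univ : Set X) ↔ i ≠ j))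
    (t : ℝ) (htC : t ∈ centerOfDistances X)
    (htne : t ≠ Metric.diam (Set.univ : Set X)) :
    ∀ i, t ∈ centerOfDistances (P i) := by
  intro i p
  obtain ⟨x, hx⟩ := htC (p : X)
  obtain ⟨j, hj, -⟩ := hpart x
  have hij : j = i := by
    by_contra hne'
    exact htne ((hdiam p x i j p.2 hj).2 (fun e => hne' e.symm) ▸ hx.symm)
  exact ⟨⟨x, hij ▸ hj⟩, hx⟩
end
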